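/- arXiv:1509.03812 — 3 statements merged into one kernel-verified Lean document; each statement's English description precedes it below -/
import Mathlib

section
/- The state-independent error satisfies ε(𝒜,𝒜') ≤ 1, and equality ε(𝒜,𝒜') = 1 holds if and only if there exists an index i with ⟨a'_i, a_i⟩ = 0. -/
open scoped ComplexInnerProductSpace

noncomputable section

variable {H : Type*} [NormedAddCommGroup H] [InnerProductSpace ℂ H] [FiniteDimensional ℂ H]
variable {ι ι' : Type*} [Fintype ι] [Fintype ι']

/-- The rank-one projector `|v⟩⟨v|`. -/
def ketbra (v : H) : H →ₗ[ℂ] H where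
  toFun x := ⟪v, x⟫ • v
  map_add' x y := by simp [inner_add_right, add_smul]
  map_smul' c x := by simp [inner_smul_right, mul_smul]

/-- A density operator: self-adjoint, positive semidefinite, trace one. -/
def IsDensity (ρ : H →ₗ[ℂ] H) : Prop :=
  LinearMap.IsSymmetric ρ ∧ (∀ x : H, 0 ≤ (⟪x, ρ x⟫).re) ∧
    LinearMap.trace ℂ H ρ = 1

lemma ketbra_apply (v x : H) : ketbra v x = ⟪v, x⟫ • v := rfl

lemma trace_eq_sum_inner' [DecidableEq ι] (b : OrthonormalBasis ι ℂ H) (T : H →ₗ[ℂ] H) :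
    LinearMap.trace ℂ H T = ∑ i, ⟪b i, T (b i)⟫ := by
  rw [LinearMap.trace_eq_matrix_trace ℂ b.toBasis, Matrix.trace]
  simp [Matrix.diag, LinearMap.toMatrix_apply, OrthonormalBasis.coe_toBasis_repr_apply,
    OrthonormalBasis.repr_apply_apply, OrthonormalBasis.coe_toBasis]

lemma trace_comp_ketbra (ρ : H →ₗ[ℂ] H) (v : H) :
    LinearMap.trace ℂ H (ρ ∘ₗ ketbra v) = ⟪v, ρ v⟫ := by
  classical
  let b := stdOrthonormalBasis ℂ H
  rw [trace_eq_sum_inner' b]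
  have h : ∀ i, ⟪b i, (ρ ∘ₗ ketbra v) (b i)⟫ = ⟪v, b i⟫ * ⟪b i, ρ v⟫ := by
    intro i
    simp [ketbra_apply, LinearMap.comp_apply, map_smul, inner_smul_right]
  rw [Finset.sum_congr rfl fun i _ => h i]
  exact b.sum_inner_mul_inner v (ρ v)

lemma sym_real {ρ : H →ₗ[ℂ] H} (hsym : ρ.IsSymmetric) (x : H) :
    ⟪x, ρ x⟫ = ((⟪x, ρ x⟫.re : ℝ) : ℂ) := by
  have h : (starRingEnd ℂ) ⟪x, ρ x⟫ = ⟪x, ρ x⟫ := by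
    rw [inner_conj_symm]; exact hsym x x
  exact (Complex.conj_eq_iff_re.mp h).symm

lemma density_cs {ρ : H →ₗ[ℂ] H} (hsym : ρ.IsSymmetric) (hpos : ∀ x : H, 0 ≤ (⟪x, ρ x⟫).re)
    (x y : H) : ‖⟪x, ρ y⟫‖ ^ 2 ≤ (⟪x, ρ x⟫).re * (⟪y, ρ y⟫).re := by
  set z : ℂ := ⟪x, ρ y⟫ with hz
  by_cases hz0 : z = 0
  · rw [hz0]
    simpa using mul_nonneg (hpos x) (hpos y)
  · set X : ℝ := (⟪x, ρ x⟫).re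
    set Y : ℝ := (⟪y, ρ y⟫).re
    have hyx : ⟪y, ρ x⟫ = starRingEnd ℂ z := by
      rw [hz, ← inner_conj_symm y (ρ x), hsym x y]
    have hkey : ∀ r : ℝ, 0 ≤ (‖z‖ ^ 2 * X) * (r * r) + (2 * ‖z‖ ^ 2) * r + Y := by
      intro r
      set α : ℂ := (r : ℂ) * z with hα
      have h1 : ⟪α • x + y, ρ (α • x + y)⟫
          = starRingEnd ℂ α * α * ⟪x, ρ x⟫ + starRingEnd ℂ α * z + α * starRingEnd ℂ z
            + ⟪y, ρ y⟫ := by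
        simp only [map_add, map_smul, inner_add_left, inner_add_right, inner_smul_left,
          inner_smul_right, hyx, ← hz]
        ring
      have h2 := hpos (α • x + y)
      rw [h1] at h2
      have hca : starRingEnd ℂ α = (r : ℂ) * starRingEnd ℂ z := by
        simp [hα, map_mul, Complex.conj_ofReal]
      have hzz : starRingEnd ℂ z * z = ((‖z‖ ^ 2 : ℝ) : ℂ) := by
        rw [mul_comm, Complex.mul_conj']; norm_cast
      have h3 : starRingEnd ℂ α * α * ⟪x, ρ x⟫ + starRingEnd ℂ α * z + α * starRingEnd ℂ z
            + ⟪y, ρ y⟫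
          = ((r * r * ‖z‖ ^ 2 : ℝ) : ℂ) * ⟪x, ρ x⟫ + ((2 * (r * ‖z‖ ^ 2) : ℝ) : ℂ) + ⟪y, ρ y⟫ := by
        rw [hca, hα]
        push_cast
        calc (r : ℂ) * starRingEnd ℂ z * ((r : ℂ) * z) * ⟪x, ρ x⟫ + (r : ℂ) * starRingEnd ℂ z * z
              + (r : ℂ) * z * starRingEnd ℂ z + ⟪y, ρ y⟫
            = (r : ℂ) * (r : ℂ) * (starRingEnd ℂ z * z) * ⟪x, ρ x⟫
              + 2 * ((r : ℂ) * (starRingEnd ℂ z * z)) + ⟪y, ρ y⟫ := by ring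
          _ = _ := by rw [hzz]; push_cast; ring
      rw [h3] at h2
      simp only [Complex.add_re, Complex.re_ofReal_mul, Complex.ofReal_re] at h2
      calc (0:ℝ) ≤ r * r * ‖z‖ ^ 2 * X + 2 * (r * ‖z‖ ^ 2) + Y := h2
        _ = (‖z‖ ^ 2 * X) * (r * r) + (2 * ‖z‖ ^ 2) * r + Y := by ring
    have hd := discrim_le_zero hkey
    rw [discrim] at hd
    have hz2 : (0:ℝ) < ‖z‖ ^ 2 := pow_pos (norm_pos_iff.mpr hz0) 2
    nlinarith [hz2]

lemma sum_two_le_one {ρ : H →ₗ[ℂ] H} (hρ : IsDensity ρ) {v w : H}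
    (hv : ‖v‖ = 1) (hw : ‖w‖ = 1) (hvw : ⟪v, w⟫ = 0) :
    (⟪v, ρ v⟫).re + (⟪w, ρ w⟫).re ≤ 1 := by
  classical
  obtain ⟨hsym, hpos, htr⟩ := hρ
  have hvne : v ≠ w := by
    intro h
    rw [h, inner_self_eq_norm_sq_to_K, hw] at hvw
    norm_num at hvw
  have hwv : ⟪w, v⟫ = 0 := by
    rw [← inner_conj_symm, hvw, map_zero]
  have horth : Orthonormal ℂ ((↑) : ({v, w} : Set H) → H) := by
    rw [orthonormal_iff_ite]
    rintro ⟨x, hx⟩ ⟨y, hy⟩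
    simp only [Set.mem_insert_iff, Set.mem_singleton_iff] at hx hy
    rcases hx with rfl | rfl <;> rcases hy with rfl | rfl <;>
      simp [Subtype.mk.injEq, hvne, hvne.symm, hvw, hwv, inner_self_eq_norm_sq_to_K, hv, hw]
  obtain ⟨u, b, hsub, hb⟩ := horth.exists_orthonormalBasis_extension
  have hv' : v ∈ u := hsub (by simp)
  have hw' : w ∈ u := hsub (by simp)
  have htr' : ∑ i : u, (⟪(i : H), ρ (i : H)⟫).re = 1 := by
    have h1 := trace_eq_sum_inner' b ρ
    rw [htr] at h1
    have h2 := congrArg Complex.re h1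
    rw [Complex.re_sum] at h2
    simp only [Complex.one_re] at h2
    rw [hb] at h2
    exact h2.symm
  have hne : (⟨v, hv'⟩ : u) ≠ ⟨w, hw'⟩ := by
    intro h; exact hvne (congrArg Subtype.val h)
  have hle : ∑ i ∈ ({⟨v, hv'⟩, ⟨w, hw'⟩} : Finset u), (⟪(i : H), ρ (i : H)⟫).re
      ≤ ∑ i : u, (⟪(i : H), ρ (i : H)⟫).re := by
    apply Finset.sum_le_sum_of_subset_of_nonneg (Finset.subset_univ _)
    intro i _ _
    exact hpos i
  rw [Finset.sum_pair hne] at hle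
  rw [htr'] at hle
  exact hle

set_option maxHeartbeats 1000000 in
lemma key_bound {ρ : H →ₗ[ℂ] H} (hρ : IsDensity ρ) {u v : H} (hu : ‖u‖ = 1) (hv : ‖v‖ = 1) :
    ‖⟪u, ρ u⟫ - ⟪v, ρ v⟫‖ ≤ Real.sqrt (1 - ‖⟪v, u⟫‖ ^ 2) := by
  obtain ⟨hsym, hpos, htr⟩ := hρ
  obtain ⟨c, hc⟩ : ∃ c : ℂ, c = ⟪v, u⟫ := ⟨_, rfl⟩
  obtain ⟨w, hwdef⟩ : ∃ w : H, w = u - c • v := ⟨_, rfl⟩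
  rw [← hc]
  have hvv : ⟪v, v⟫ = 1 := by rw [inner_self_eq_norm_sq_to_K, hv]; norm_num
  have huu : ⟪u, u⟫ = 1 := by rw [inner_self_eq_norm_sq_to_K, hu]; norm_num
  have huv : ⟪u, v⟫ = starRingEnd ℂ c := by rw [hc, inner_conj_symm]
  have hvw : ⟪v, w⟫ = 0 := by
    rw [hwdef, inner_sub_right, inner_smul_right, hvv, mul_one, ← hc, sub_self]
  have hcc : starRingEnd ℂ c * c = ((‖c‖ ^ 2 : ℝ) : ℂ) := by
    rw [mul_comm, Complex.mul_conj']; norm_cast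
  have hww : ⟪w, w⟫ = ((1 - ‖c‖ ^ 2 : ℝ) : ℂ) := by
    have h1 : ⟪w, w⟫ = ⟪u, w⟫ := by
      nth_rewrite 1 [hwdef]
      rw [inner_sub_left, inner_smul_left, hvw, mul_zero, sub_zero]
    rw [h1, hwdef, inner_sub_right, inner_smul_right, huu, huv, mul_comm, hcc]
    push_cast
    ring
  obtain ⟨s, hsdef⟩ : ∃ s : ℝ, s = ‖w‖ := ⟨_, rfl⟩
  have hs0 : 0 ≤ s := hsdef ▸ norm_nonneg w
  have hs2 : s ^ 2 = 1 - ‖c‖ ^ 2 := by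
    have h := inner_self_eq_norm_sq_to_K (𝕜 := ℂ) w
    rw [hww] at h
    have h3 : ((s ^ 2 : ℝ) : ℂ) = ((1 - ‖c‖ ^ 2 : ℝ) : ℂ) := by
      rw [hsdef]; push_cast; push_cast at h; exact h.symm
    exact_mod_cast h3
  have hgoal_rhs : Real.sqrt (1 - ‖c‖ ^ 2) = s := by rw [← hs2, Real.sqrt_sq hs0]
  rw [hgoal_rhs]
  have hure := sym_real hsym u
  have hvre := sym_real hsym v
  obtain ⟨t, htdef⟩ : ∃ t : ℝ, t = (⟪v, ρ v⟫).re := ⟨_, rfl⟩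
  obtain ⟨T, hTdef⟩ : ∃ T : ℝ, T = (⟪u, ρ u⟫).re := ⟨_, rfl⟩
  have hnorm : ‖⟪u, ρ u⟫ - ⟪v, ρ v⟫‖ = |T - t| := by
    rw [hure, hvre, ← htdef, ← hTdef, ← Complex.ofReal_sub, Complex.norm_real,
      Real.norm_eq_abs]
  rw [hnorm]
  obtain ⟨ζ, hζdef⟩ : ∃ z : ℂ, z = ⟪v, ρ w⟫ := ⟨_, rfl⟩
  obtain ⟨R, hRdef⟩ : ∃ r : ℝ, r = (starRingEnd ℂ c * ζ).re := ⟨_, rfl⟩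
  obtain ⟨Q, hQdef⟩ : ∃ q : ℝ, q = (⟪w, ρ w⟫).re := ⟨_, rfl⟩
  have hwv : ⟪w, ρ v⟫ = starRingEnd ℂ ζ := by
    rw [hζdef, ← inner_conj_symm w (ρ v), hsym v w]
  have hueq : u = c • v + w := by rw [hwdef]; abel
  have hraw : ⟪u, ρ u⟫ = starRingEnd ℂ c * c * ⟪v, ρ v⟫ + (starRingEnd ℂ c * ζ
      + c * starRingEnd ℂ ζ) + ⟪w, ρ w⟫ := by
    conv_lhs => rw [hueq]
    simp only [map_add, map_smul, inner_add_left, inner_add_right, inner_smul_left,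
      inner_smul_right, hwv, ← hζdef]
    ring
  have hre : T = ‖c‖ ^ 2 * t + 2 * R + Q := by
    rw [hTdef, hraw, hcc, htdef, hRdef, hQdef]
    simp only [Complex.add_re, Complex.re_ofReal_mul, Complex.mul_re, Complex.conj_re,
      Complex.conj_im, Complex.ofReal_re, Complex.ofReal_im]
    ring
  by_cases hw0 : w = 0
  · have hz : ζ = 0 := by rw [hζdef, hw0]; simp
    have hQ0 : Q = 0 := by rw [hQdef, hw0]; simp
    have hc2 : ‖c‖ ^ 2 = 1 := by
      have hs' : s = 0 := by rw [hsdef, hw0, norm_zero]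
      rw [hs'] at hs2
      have h0 : (0:ℝ) ^ 2 = 0 := by norm_num
      linarith
    have : T = t := by rw [hre, hQ0, hRdef, hz, mul_zero, hc2]; simp
    rw [this]
    simp [hs0]
  have hsne : s ≠ 0 := by rw [hsdef]; simpa [norm_eq_zero] using hw0
  obtain ⟨w₀, hw₀def⟩ : ∃ w₀ : H, w₀ = ((s⁻¹ : ℝ) : ℂ) • w := ⟨_, rfl⟩
  have hw₀norm : ‖w₀‖ = 1 := by
    rw [hw₀def, norm_smul, Complex.norm_real, Real.norm_eq_abs, abs_inv, abs_of_nonneg hs0,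
      ← hsdef]
    field_simp
  have hweq : w = ((s : ℝ) : ℂ) • w₀ := by
    rw [hw₀def, smul_smul, ← Complex.ofReal_mul, mul_inv_cancel₀ hsne]
    simp
  obtain ⟨q, hqdef⟩ : ∃ q : ℝ, q = (⟪w₀, ρ w₀⟫).re := ⟨_, rfl⟩
  have hQ : Q = s ^ 2 * q := by
    rw [hQdef]
    conv_lhs => rw [hweq]
    rw [inner_smul_left, map_smul, inner_smul_right, Complex.conj_ofReal, ← mul_assoc,
      ← Complex.ofReal_mul, Complex.re_ofReal_mul, hqdef]
    ring
  have hvw₀ : ⟪v, w₀⟫ = 0 := by rw [hw₀def, inner_smul_right, hvw, mul_zero]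
  have httq : t + q ≤ 1 := by
    rw [htdef, hqdef]; exact sum_two_le_one ⟨hsym, hpos, htr⟩ hv hw₀norm hvw₀
  have ht0 : 0 ≤ t := htdef ▸ hpos v
  have hq0 : 0 ≤ q := hqdef ▸ hpos w₀
  obtain ⟨k, hkdef⟩ : ∃ k : ℝ, k = Real.sqrt (t * q) := ⟨_, rfl⟩
  have hk0 : 0 ≤ k := hkdef ▸ Real.sqrt_nonneg _
  have hk2 : k ^ 2 = t * q := by rw [hkdef]; exact Real.sq_sqrt (mul_nonneg ht0 hq0)
  have hζ2 : ‖ζ‖ ^ 2 ≤ t * (s ^ 2 * q) := by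
    have h := density_cs hsym hpos v w
    rw [← hζdef, ← htdef, ← hQdef] at h
    rw [← hQ]
    exact h
  have hζk : ‖ζ‖ ≤ s * k := by
    have h1 : ‖ζ‖ ^ 2 ≤ (s * k) ^ 2 := by
      calc ‖ζ‖ ^ 2 ≤ t * (s ^ 2 * q) := hζ2
        _ = (s * k) ^ 2 := by rw [mul_pow, hk2]; ring
    have h2 := Real.sqrt_le_sqrt h1
    rwa [Real.sqrt_sq (norm_nonneg ζ), Real.sqrt_sq (mul_nonneg hs0 hk0)] at h2
  have hc0 : 0 ≤ ‖c‖ := norm_nonneg c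
  have hRabs : |R| ≤ ‖c‖ * (s * k) := by
    rw [hRdef]
    calc |(starRingEnd ℂ c * ζ).re| ≤ ‖starRingEnd ℂ c * ζ‖ := Complex.abs_re_le_norm _
      _ = ‖c‖ * ‖ζ‖ := by rw [norm_mul, RCLike.norm_conj]
      _ ≤ ‖c‖ * (s * k) := mul_le_mul_of_nonneg_left hζk hc0
  have hRub : R ≤ ‖c‖ * (s * k) := le_trans (le_abs_self R) hRabs
  have hRlb : -(‖c‖ * (s * k)) ≤ R := neg_le_of_abs_le hRabs
  have hΔ : T - t = s ^ 2 * (q - t) + 2 * R := by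
    rw [hre, hQ]
    have hcc2 : ‖c‖ ^ 2 = 1 - s ^ 2 := by linarith
    rw [hcc2]; ring
  rw [hΔ]
  have hcs2 : s ^ 2 + ‖c‖ ^ 2 = 1 := by linarith
  have hid1 : (t + q) ^ 2 - (s * (q - t) + 2 * (‖c‖ * k)) ^ 2
      = (‖c‖ * (q - t) - 2 * s * k) ^ 2 := by
    linear_combination (-4 : ℝ) * hk2 - ((q - t) ^ 2 + 4 * k ^ 2) * hcs2
  have hsq1 : (s * (q - t) + 2 * (‖c‖ * k)) ^ 2 ≤ (t + q) ^ 2 := by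
    linarith [sq_nonneg (‖c‖ * (q - t) - 2 * s * k), hid1]
  have hid2 : (t + q) ^ 2 - (s * (t - q) + 2 * (‖c‖ * k)) ^ 2
      = (‖c‖ * (t - q) - 2 * s * k) ^ 2 := by
    linear_combination (-4 : ℝ) * hk2 - ((t - q) ^ 2 + 4 * k ^ 2) * hcs2
  have hsq2 : (s * (t - q) + 2 * (‖c‖ * k)) ^ 2 ≤ (t + q) ^ 2 := by
    linarith [sq_nonneg (‖c‖ * (t - q) - 2 * s * k), hid2]
  have htq0 : 0 ≤ t + q := by linarith
  have hb1 : s * (q - t) + 2 * (‖c‖ * k) ≤ t + q := by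
    have h := Real.sqrt_le_sqrt hsq1
    rw [Real.sqrt_sq_eq_abs, Real.sqrt_sq htq0] at h
    exact le_trans (le_abs_self _) h
  have hb2 : s * (t - q) + 2 * (‖c‖ * k) ≤ t + q := by
    have h := Real.sqrt_le_sqrt hsq2
    rw [Real.sqrt_sq_eq_abs, Real.sqrt_sq htq0] at h
    exact le_trans (le_abs_self _) h
  have hm1 : s * (s * (q - t) + 2 * (‖c‖ * k)) ≤ s * (t + q) :=
    mul_le_mul_of_nonneg_left hb1 hs0
  have hm2 : s * (s * (t - q) + 2 * (‖c‖ * k)) ≤ s * (t + q) :=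
    mul_le_mul_of_nonneg_left hb2 hs0
  have hstq : s * (t + q) ≤ s := by
    calc s * (t + q) ≤ s * 1 := mul_le_mul_of_nonneg_left httq hs0
      _ = s := mul_one s
  rw [abs_le]
  constructor
  · have e2 : s * (s * (t - q) + 2 * (‖c‖ * k)) = s ^ 2 * (t - q) + 2 * (‖c‖ * (s * k)) := by
      ring
    rw [e2] at hm2
    linarith
  · have e1 : s * (s * (q - t) + 2 * (‖c‖ * k)) = s ^ 2 * (q - t) + 2 * (‖c‖ * (s * k)) := by
      ring
    rw [e1] at hm1
    linarith

/-- The state-dependent error `ε_ρ(𝒜,𝒜')`. -/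
def sdError (a a' : ι → H) (ρ : H →ₗ[ℂ] H) : ℝ :=
  ⨆ i : ι, ‖LinearMap.trace ℂ H (ρ ∘ₗ (ketbra (a i) - ketbra (a' i)))‖

/-- The state-independent error `ε(𝒜,𝒜')`. -/
def siError (a a' : ι → H) : ℝ :=
  ⨆ ρ : {ρ : H →ₗ[ℂ] H // IsDensity ρ}, sdError a a' ρ.1

/-- The operator `|b_i⟩⟨b_i| − Σ_j |⟨a'_j, b_i⟩|² |a'_j⟩⟨a'_j|`. -/
def distOp (a' : ι' → H) (b : ι → H) (i : ι) : H →ₗ[ℂ] H :=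
  ketbra (b i) - ∑ j : ι', (‖⟪a' j, b i⟫‖ ^ 2 : ℂ) • ketbra (a' j)

/-- The state-dependent disturbance `η_ρ(𝒜',ℬ)`. -/
def sdDist (a' : ι' → H) (b : ι → H) (ρ : H →ₗ[ℂ] H) : ℝ :=
  ⨆ i : ι, ‖LinearMap.trace ℂ H (ρ ∘ₗ distOp a' b i)‖

/-- The state-independent disturbance `η(𝒜',ℬ)`. -/
def siDist (a' : ι' → H) (b : ι → H) : ℝ :=
  ⨆ ρ : {ρ : H →ₗ[ℂ] H // IsDensity ρ}, sdDist a' b ρ.1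

/-- The state-independent overall error `Δ(𝒜,𝒜',ℬ)`. -/
def siOverall (a a' b : ι → H) : ℝ :=
  ⨆ ρ : {ρ : H →ₗ[ℂ] H // IsDensity ρ}, (sdError a a' ρ.1 + sdDist a' b ρ.1)

/-- `ε(𝒜,𝒜') ≤ 1`, with equality iff some `⟨a'_i, a_i⟩ = 0`. -/
theorem state_independent_error_le_one_iff {d : ℕ} (hd : 2 ≤ d)
    (a a' : OrthonormalBasis (Fin d) ℂ H) :
    siError (⇑a) (⇑a') ≤ 1 ∧
      (siError (⇑a) (⇑a') = 1 ↔ ∃ i : Fin d, ⟪a' i, a i⟫ = 0) := by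
  classical
  haveI : Nonempty (Fin d) := ⟨⟨0, by omega⟩⟩
  have hna : ∀ i, ‖a i‖ = 1 := fun i => a.orthonormal.1 i
  have hna' : ∀ i, ‖a' i‖ = 1 := fun i => a'.orthonormal.1 i
  have htrd : ∀ (ρ : H →ₗ[ℂ] H) (i : Fin d),
      LinearMap.trace ℂ H (ρ ∘ₗ (ketbra (a i) - ketbra (a' i)))
        = ⟪a i, ρ (a i)⟫ - ⟪a' i, ρ (a' i)⟫ := by
    intro ρ i
    rw [LinearMap.comp_sub, map_sub, trace_comp_ketbra, trace_comp_ketbra]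
  have hsd : ∀ (ρ : H →ₗ[ℂ] H), IsDensity ρ → ∀ i : Fin d,
      ‖LinearMap.trace ℂ H (ρ ∘ₗ (ketbra (a i) - ketbra (a' i)))‖
        ≤ Real.sqrt (1 - ‖⟪a' i, a i⟫‖ ^ 2) := by
    intro ρ hρ i
    rw [htrd]
    exact key_bound hρ (hna i) (hna' i)
  have hsqrt_le_one : ∀ i : Fin d, Real.sqrt (1 - ‖⟪a' i, a i⟫‖ ^ 2) ≤ 1 := by
    intro i
    calc Real.sqrt (1 - ‖⟪a' i, a i⟫‖ ^ 2) ≤ Real.sqrt 1 :=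
          Real.sqrt_le_sqrt (by nlinarith [sq_nonneg ‖⟪a' i, a i⟫‖])
      _ = 1 := Real.sqrt_one
  have hsd1 : ∀ (ρ : H →ₗ[ℂ] H), IsDensity ρ → sdError (⇑a) (⇑a') ρ ≤ 1 := by
    intro ρ hρ
    exact Real.iSup_le (fun i => le_trans (hsd ρ hρ i) (hsqrt_le_one i)) zero_le_one
  have hle1 : siError (⇑a) (⇑a') ≤ 1 :=
    Real.iSup_le (fun ρ => hsd1 ρ.1 ρ.2) zero_le_one
  have hBdd : BddAbove (Set.range fun ρ : {ρ : H →ₗ[ℂ] H // IsDensity ρ} =>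
      sdError (⇑a) (⇑a') ρ.1) := by
    refine ⟨1, ?_⟩
    rintro x ⟨ρ, rfl⟩
    exact hsd1 ρ.1 ρ.2
  refine ⟨hle1, ?_, ?_⟩
  · -- siError = 1 → ∃ i
    intro h1
    by_contra hno
    push_neg at hno
    have hcle : ∀ i : Fin d, ‖⟪a' i, a i⟫‖ ≤ 1 := by
      intro i
      calc ‖⟪a' i, a i⟫‖ ≤ ‖a' i‖ * ‖a i‖ := norm_inner_le_norm _ _
        _ = 1 := by rw [hna, hna']; norm_num
    set m : ℝ := Finset.univ.sup' Finset.univ_nonempty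
      (fun i : Fin d => Real.sqrt (1 - ‖⟪a' i, a i⟫‖ ^ 2)) with hmdef
    have hm0 : 0 ≤ m := by
      obtain ⟨i⟩ := (inferInstance : Nonempty (Fin d))
      rw [hmdef]
      exact le_trans (Real.sqrt_nonneg _)
        (Finset.le_sup' (fun j : Fin d => Real.sqrt (1 - ‖⟪a' j, a j⟫‖ ^ 2))
          (Finset.mem_univ i))
    have hmlt : m < 1 := by
      rw [hmdef, Finset.sup'_lt_iff]
      intro i _
      have hp : 0 < ‖⟪a' i, a i⟫‖ := norm_pos_iff.mpr (hno i)
      have h2 : 1 - ‖⟪a' i, a i⟫‖ ^ 2 < 1 := by nlinarith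
      have h3 : 0 ≤ 1 - ‖⟪a' i, a i⟫‖ ^ 2 := by nlinarith [hcle i]
      calc Real.sqrt (1 - ‖⟪a' i, a i⟫‖ ^ 2) < Real.sqrt 1 := Real.sqrt_lt_sqrt h3 h2
        _ = 1 := Real.sqrt_one
    have hsim : siError (⇑a) (⇑a') ≤ m := by
      apply Real.iSup_le _ hm0
      intro ρ
      apply Real.iSup_le _ hm0
      intro i
      refine le_trans (hsd ρ.1 ρ.2 i) ?_
      rw [hmdef]
      exact Finset.le_sup' (fun j : Fin d => Real.sqrt (1 - ‖⟪a' j, a j⟫‖ ^ 2))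
        (Finset.mem_univ i)
    rw [h1] at hsim
    linarith
  · -- ∃ i → siError = 1
    rintro ⟨i, hi⟩
    set ρ0 : H →ₗ[ℂ] H := ketbra (a i) with hρ0def
    have haa : ⟪a i, a i⟫ = 1 := by
      rw [inner_self_eq_norm_sq_to_K, hna i]; norm_num
    have hρ0 : IsDensity ρ0 := by
      refine ⟨?_, ?_, ?_⟩
      · intro x y
        rw [hρ0def]
        show ⟪⟪a i, x⟫ • a i, y⟫ = ⟪x, ⟪a i, y⟫ • a i⟫
        rw [inner_smul_left, inner_smul_right, ← inner_conj_symm x (a i)]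
        ring
      · intro x
        rw [hρ0def]
        show 0 ≤ (⟪x, ⟪a i, x⟫ • a i⟫).re
        rw [inner_smul_right]
        have h4 : ⟪a i, x⟫ * ⟪x, a i⟫ = ((‖⟪a i, x⟫‖ ^ 2 : ℝ) : ℂ) := by
          rw [← inner_conj_symm x (a i), Complex.mul_conj']
          norm_cast
        rw [h4, Complex.ofReal_re]
        positivity
      · rw [hρ0def, ← LinearMap.id_comp (ketbra (a i)), trace_comp_ketbra]
        show (⟪a i, a i⟫ : ℂ) = 1
        exact haa
    have hval : ‖LinearMap.trace ℂ H (ρ0 ∘ₗ (ketbra (a i) - ketbra (a' i)))‖ = 1 := by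
      rw [htrd]
      have h5 : ρ0 (a i) = a i := by
        rw [hρ0def]
        show ⟪a i, a i⟫ • a i = a i
        rw [haa, one_smul]
      have h6 : ⟪a' i, ρ0 (a' i)⟫ = 0 := by
        rw [hρ0def]
        show ⟪a' i, ⟪a i, a' i⟫ • a i⟫ = 0
        rw [inner_smul_right, hi, mul_zero]
      rw [h5, h6, haa, sub_zero, norm_one]
    have hge1 : 1 ≤ sdError (⇑a) (⇑a') ρ0 := by
      unfold sdError
      rw [← hval]
      exact le_ciSup
        (f := fun j : Fin d => ‖LinearMap.trace ℂ H (ρ0 ∘ₗ (ketbra (a j) - ketbra (a' j)))‖)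
        (Set.Finite.bddAbove (Set.finite_range _)) i
    have hge2 : sdError (⇑a) (⇑a') ρ0 ≤ siError (⇑a) (⇑a') :=
      le_ciSup hBdd (⟨ρ0, hρ0⟩ : {ρ : H →ₗ[ℂ] H // IsDensity ρ})
    exact le_antisymm hle1 (le_trans hge1 hge2)
end
end

section
/- Let M be a Hermitian (self-adjoint) operator on a d-dimensional complex Hilbert space (d ≥ 2) with tr(M) = 0. Then tr(M²) ≥ (d/(d−1)) · r², where r is the spectral radius of M (equivalently, the largest of the absolute values of the eigenvalues of M, equivalently the operator norm of M). -/
open scoped ComplexInnerProductSpace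

noncomputable section

variable {H : Type*} [NormedAddCommGroup H] [InnerProductSpace ℂ H] [FiniteDimensional ℂ H]
variable {ι ι' : Type*} [Fintype ι] [Fintype ι']

/-- a traceless Hermitian operator `M` on a `d`-dimensional space satisfies
`tr(M²) ≥ (d/(d-1)) r²` where `r` is its spectral radius (= operator norm). -/
theorem traceless_hermitian_trace_sq_bound {d : ℕ} (hd : 2 ≤ d)
    (hdim : Module.finrank ℂ H = d)
    (M : H →L[ℂ] H) (hM : IsSelfAdjoint M)
    (htr : LinearMap.trace ℂ H M.toLinearMap = 0) :
    (d : ℝ) / ((d : ℝ) - 1) * ‖M‖ ^ 2 ≤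
      (LinearMap.trace ℂ H (M.toLinearMap ∘ₗ M.toLinearMap)).re := by
  classical
  have hS : (M.toLinearMap).IsSymmetric :=
    ContinuousLinearMap.isSelfAdjoint_iff_isSymmetric.mp hM
  set b := hS.eigenvectorBasis hdim with hb
  set μ := hS.eigenvalues hdim with hμ
  have hdiag : ∀ (f : H →ₗ[ℂ] H), LinearMap.trace ℂ H f = ∑ i, b.repr (f (b i)) i := by
    intro f
    rw [LinearMap.trace_eq_matrix_trace ℂ b.toBasis, Matrix.trace]
    simp [LinearMap.toMatrix_apply, Matrix.diag]
  have hrepr : ∀ (v : H) (i : Fin d), b.repr (M v) i = μ i * b.repr v i := by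
    intro v i
    exact hS.eigenvectorBasis_apply_self_apply hdim v i
  have hrself : ∀ i : Fin d, b.repr (b i) i = 1 := by
    intro i; simp [OrthonormalBasis.repr_self, EuclideanSpace.single_apply]
  have htr1 : ∑ i, (μ i : ℂ) = 0 := by
    have h := hdiag M.toLinearMap
    rw [htr] at h
    symm; rw [h]
    refine Finset.sum_congr rfl fun i _ => ?_
    rw [ContinuousLinearMap.coe_coe, hrepr, hrself, mul_one]
  have hμsum : ∑ i, μ i = 0 := by
    have := congrArg Complex.re htr1
    simpa using this
  have htr2 : (LinearMap.trace ℂ H (M.toLinearMap ∘ₗ M.toLinearMap)).re = ∑ i, μ i ^ 2 := by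
    rw [hdiag]
    have h : ∀ i : Fin d, b.repr ((M.toLinearMap ∘ₗ M.toLinearMap) (b i)) i = ((μ i)^2 : ℝ) := by
      intro i
      simp only [LinearMap.comp_apply, ContinuousLinearMap.coe_coe]
      rw [hrepr, hrepr, hrself]
      push_cast; ring
    rw [Finset.sum_congr rfl fun i _ => h i]
    simp [← Complex.ofReal_pow]
  obtain ⟨i0, -, hi0⟩ := Finset.exists_max_image (Finset.univ : Finset (Fin d))
    (fun i => |μ i|) ⟨⟨0, by omega⟩, Finset.mem_univ _⟩
  have hnorm : ‖M‖ ≤ |μ i0| := by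
    refine ContinuousLinearMap.opNorm_le_bound M (abs_nonneg _) fun x => ?_
    have h1 : ‖M x‖ ^ 2 ≤ (|μ i0| * ‖x‖) ^ 2 := by
      rw [← b.repr.norm_map (M x), ← b.repr.norm_map x]
      rw [EuclideanSpace.norm_eq, EuclideanSpace.norm_eq]
      rw [Real.sq_sqrt (by positivity)]
      rw [mul_pow, Real.sq_sqrt (by positivity), Finset.mul_sum]
      refine Finset.sum_le_sum fun i _ => ?_
      rw [hrepr, norm_mul, mul_pow, Complex.norm_real, Real.norm_eq_abs]
      have h3 := hi0 i (Finset.mem_univ i)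
      have h2 : (0:ℝ) ≤ ‖b.repr x i‖ ^ 2 := by positivity
      exact mul_le_mul_of_nonneg_right (pow_le_pow_left₀ (abs_nonneg _) h3 2) h2
    nlinarith [norm_nonneg (M x), mul_nonneg (abs_nonneg (μ i0)) (norm_nonneg x)]
  have hd1 : (1:ℝ) ≤ (d:ℝ) - 1 := by
    have : (2:ℝ) ≤ (d:ℝ) := by exact_mod_cast hd
    linarith
  have hcs : (μ i0) ^ 2 ≤ ((d : ℝ) - 1) * ∑ i ∈ Finset.univ.erase i0, μ i ^ 2 := by
    have hsum : ∑ i ∈ Finset.univ.erase i0, μ i = - μ i0 := by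
      have h := Finset.add_sum_erase Finset.univ μ (Finset.mem_univ i0)
      rw [hμsum] at h; linarith
    have h2 := sq_sum_le_card_mul_sum_sq (s := Finset.univ.erase i0) (f := μ)
    have hcard : ((Finset.univ.erase i0).card : ℝ) = (d:ℝ) - 1 := by
      rw [Finset.card_erase_of_mem (Finset.mem_univ i0), Finset.card_univ, Fintype.card_fin,
        Nat.cast_sub (by omega)]
      simp
    rw [hsum, hcard] at h2
    simpa [neg_pow] using h2
  have hfin : (d:ℝ)/((d:ℝ)-1) * (μ i0)^2 ≤ ∑ i, μ i ^ 2 := by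
    have hpos : (0:ℝ) < (d:ℝ) - 1 := by linarith
    have hsplit : μ i0 ^ 2 + ∑ i ∈ Finset.univ.erase i0, μ i ^ 2 = ∑ i, μ i ^ 2 :=
      Finset.add_sum_erase Finset.univ (fun i => μ i ^ 2) (Finset.mem_univ i0)
    have h4 : μ i0 ^ 2 / ((d:ℝ)-1) ≤ ∑ i ∈ Finset.univ.erase i0, μ i ^ 2 := by
      rw [div_le_iff₀ hpos]; nlinarith
    have h5 : (d:ℝ)/((d:ℝ)-1) * (μ i0)^2 = μ i0 ^ 2 + μ i0 ^ 2/((d:ℝ)-1) := by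
      field_simp; ring
    linarith
  rw [htr2]
  refine le_trans ?_ hfin
  have hM2 : ‖M‖ ^ 2 ≤ (μ i0) ^ 2 := by
    rw [← sq_abs (μ i0)]
    exact pow_le_pow_left₀ (norm_nonneg M) hnorm 2
  have : (0:ℝ) ≤ (d:ℝ)/((d:ℝ)-1) := by positivity
  nlinarith
end
end

section
/- Suppose d = 2. Then the state-independent disturbance of ℬ due to 𝒜 is η(𝒜,ℬ) = |⟨a_1, b_1⟩| · √(1 − |⟨a_1, b_1⟩|²) (equivalently, (1/2)sin θ where θ = arccos|𝐚·𝐛| is the angle between the Bloch vectors of the bases 𝒜 and ℬ). -/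
open scoped ComplexInnerProductSpace

noncomputable section

variable {H : Type*} [NormedAddCommGroup H] [InnerProductSpace ℂ H] [FiniteDimensional ℂ H]
variable {ι ι' : Type*} [Fintype ι] [Fintype ι']

/-!
In the basis `a`, the operator `distOp a b i` has vanishing diagonal and off-diagonal entry
`cᵢ = conj ⟪a 0, b i⟫ * ⟪a 1, b i⟫`, so `tr (ρ ∘ distOp a b i) = 2 Re (cᵢ ρ₀₁)`. Positivity and
unit trace of `ρ` give `2 |ρ₀₁| ≤ ρ₀₀ + ρ₁₁ = 1`, hence the disturbance is at most `|cᵢ|`, which by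
unitarity of the change of basis equals `|⟪a 0, b 0⟫| √(1 - |⟪a 0, b 0⟫|²)` for both `i`. The pure
state `(a 0 + e^{i arg c₀} a 1) / √2` attains the bound.
-/

open ComplexConjugate InnerProductSpace

section

variable {E : Type*} [NormedAddCommGroup E] [InnerProductSpace ℂ E]

/-- Test positivity on `x - e^{i arg z} y` with `z = ⟪y, T x⟫`. -/
theorem LinearMap.IsPositive.two_mul_norm_inner_le {T : E →ₗ[ℂ] E} (hT : T.IsPositive)
    (x y : E) : 2 * ‖⟪y, T x⟫‖ ≤ (⟪x, T x⟫).re + (⟪y, T y⟫).re := by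
  set z := ⟪y, T x⟫
  set φ := Complex.exp (z.arg * Complex.I)
  have hφ : conj φ * φ = 1 := by
    rw [Complex.conj_mul', Complex.norm_exp_ofReal_mul_I]; norm_num
  have hz : z = ‖z‖ * φ := (Complex.norm_mul_exp_arg_mul_I z).symm
  have hzc : ⟪x, T y⟫ = ‖z‖ * conj φ := by
    rw [← hT.isSymmetric, ← inner_conj_symm, congrArg conj hz, map_mul, Complex.conj_ofReal]
  have hpos := hT.re_inner_nonneg_right (x - φ • y)
  have expand : ⟪x - φ • y, T (x - φ • y)⟫ = ⟪x, T x⟫ + ⟪y, T y⟫ - 2 * ‖z‖ := by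
    simp only [map_sub, map_smul, inner_sub_left, inner_sub_right, inner_smul_left,
      inner_smul_right, hzc]
    linear_combination (⟪y, T y⟫ - 2 * ‖z‖) * hφ - conj φ * hz
  rw [expand] at hpos
  simpa using hpos

lemma isDensity_iff {ρ : E →ₗ[ℂ] E} :
    IsDensity ρ ↔ ρ.IsPositive ∧ LinearMap.trace ℂ E ρ = 1 := by
  refine ⟨fun ⟨hs, hp, ht⟩ ↦ ⟨⟨hs, fun x ↦ ?_⟩, ht⟩,
    fun ⟨hp, ht⟩ ↦ ⟨hp.1, hp.re_inner_nonneg_right, ht⟩⟩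
  rw [hs]; exact hp x

lemma inner_ketbra_apply (u x y : E) : ⟪x, ketbra u y⟫ = ⟪u, y⟫ * ⟪x, u⟫ :=
  inner_smul_right _ _ _

lemma ketbra_eq_rankOne (v : E) : ketbra v = (rankOne ℂ v v : E →L[ℂ] E) := rfl

lemma isDensity_ketbra [FiniteDimensional ℂ E] {u : E} (hu : ‖u‖ = 1) :
    IsDensity (ketbra u) := by
  rw [isDensity_iff, ketbra_eq_rankOne, trace_rankOne, inner_self_eq_norm_sq_to_K, hu]
  exact ⟨(isPositive_rankOne_self u).toLinearMap, by norm_num⟩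

lemma distOp_apply_basis {ν κ : Type*} [Fintype ν] (a : OrthonormalBasis ν ℂ E) (b : κ → E)
    (i : κ) (k : ν) :
    distOp a b i (a k) = ⟪b i, a k⟫ • b i - (‖⟪a k, b i⟫‖ ^ 2 : ℂ) • a k := by
  classical
  simp [distOp, ketbra, orthonormal_iff_ite.mp a.orthonormal]

lemma norm_trace_comp_distOp_le_sdDist {ν κ : Type*} [Fintype ν] [Finite κ] (a : ν → E)
    (b : κ → E) (ρ : E →ₗ[ℂ] E) (i : κ) :
    ‖LinearMap.trace ℂ E (ρ ∘ₗ distOp a b i)‖ ≤ sdDist a b ρ :=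
  le_ciSup (Finite.bddAbove_range fun j ↦ ‖LinearMap.trace ℂ E (ρ ∘ₗ distOp a b j)‖) i

end

section

variable {E κ : Type*} [NormedAddCommGroup E] [InnerProductSpace ℂ E]
  (a : OrthonormalBasis (Fin 2) ℂ E)

lemma OrthonormalBasis.sq_norm_inner_zero_add_sq_norm_inner_one (x : E) :
    ‖⟪a 0, x⟫‖ ^ 2 + ‖⟪a 1, x⟫‖ ^ 2 = ‖x‖ ^ 2 := by
  simpa [Fin.sum_univ_two] using a.sum_sq_norm_inner_right x

lemma distOp_apply_fin_two (b : κ → E) (i : κ) (k : Fin 2) :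
    distOp a b i (a k) = (conj ⟪a k, b i⟫ * ⟪a k.rev, b i⟫) • a k.rev := by
  obtain ⟨α, β, hα, hβ, hb⟩ : ∃ α β, ⟪a 0, b i⟫ = α ∧ ⟪a 1, b i⟫ = β ∧ b i = α • a 0 + β • a 1 :=
    ⟨_, _, rfl, rfl, by simpa [Fin.sum_univ_two] using (a.sum_repr' (b i)).symm⟩
  rw [distOp_apply_basis, ← inner_conj_symm (b i), ← Complex.conj_mul']
  revert k
  refine Fin.forall_fin_two.2 ⟨?_, ?_⟩
  all_goals
    simp only [Fin.reduceRev, hα, hβ]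
    rw [hb]
    module

lemma trace_comp_distOp_fin_two {ρ : E →ₗ[ℂ] E} (hρ : ρ.IsSymmetric) (b : κ → E) (i : κ) :
    LinearMap.trace ℂ E (ρ ∘ₗ distOp a b i)
      = 2 * (conj ⟪a 0, b i⟫ * ⟪a 1, b i⟫ * ⟪a 0, ρ (a 1)⟫).re := by
  have hsymm : ⟪a 1, ρ (a 0)⟫ = conj ⟪a 0, ρ (a 1)⟫ := by rw [inner_conj_symm, hρ]
  have hre := Complex.add_conj (conj ⟪a 0, b i⟫ * ⟪a 1, b i⟫ * ⟪a 0, ρ (a 1)⟫)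
  push_cast at hre
  rw [LinearMap.trace_eq_sum_inner _ a, Fin.sum_univ_two, ← hre]
  simp only [LinearMap.comp_apply, distOp_apply_fin_two, Fin.reduceRev, map_smul,
    inner_smul_right, hsymm, map_mul, Complex.conj_conj]
  ring

lemma norm_trace_comp_distOp_le {ρ : E →ₗ[ℂ] E} (hρ : IsDensity ρ) (b : κ → E) (i : κ) :
    ‖LinearMap.trace ℂ E (ρ ∘ₗ distOp a b i)‖ ≤ ‖⟪a 0, b i⟫‖ * ‖⟪a 1, b i⟫‖ := by
  obtain ⟨hpos, htr⟩ := isDensity_iff.mp hρ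
  have hdiag : (⟪a 0, ρ (a 0)⟫).re + (⟪a 1, ρ (a 1)⟫).re = 1 := by
    simpa [LinearMap.trace_eq_sum_inner _ a, Fin.sum_univ_two] using congrArg Complex.re htr
  have hoff := hpos.two_mul_norm_inner_le (a 1) (a 0)
  rw [trace_comp_distOp_fin_two a hpos.isSymmetric]
  set w := conj ⟪a 0, b i⟫ * ⟪a 1, b i⟫ * ⟪a 0, ρ (a 1)⟫
  calc ‖(2 * w.re : ℂ)‖ = 2 * |w.re| := by simp
    _ ≤ 2 * ‖w‖ := by gcongr; exact Complex.abs_re_le_norm w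
    _ = ‖⟪a 0, b i⟫‖ * ‖⟪a 1, b i⟫‖ * (2 * ‖⟪a 0, ρ (a 1)⟫‖) := by
      simp only [w, norm_mul, Complex.norm_conj]; ring
    _ ≤ ‖⟪a 0, b i⟫‖ * ‖⟪a 1, b i⟫‖ := by
      apply mul_le_of_le_one_right (by positivity); linarith

lemma norm_inner_mul_norm_inner_eq (b : OrthonormalBasis (Fin 2) ℂ E) (i : Fin 2) :
    ‖⟪a 0, b i⟫‖ * ‖⟪a 1, b i⟫‖ = ‖⟪a 0, b 0⟫‖ * √(1 - ‖⟪a 0, b 0⟫‖ ^ 2) := by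
  have hcol (j : Fin 2) : ‖⟪a 1, b j⟫‖ = √(1 - ‖⟪a 0, b j⟫‖ ^ 2) := by
    have hparseval := a.sq_norm_inner_zero_add_sq_norm_inner_one (b j)
    rw [b.orthonormal.1 j] at hparseval
    rw [← Real.sqrt_sq (norm_nonneg ⟪a 1, b j⟫)]
    congr 1; linarith
  have hrow : ‖⟪a 0, b 1⟫‖ ^ 2 = 1 - ‖⟪a 0, b 0⟫‖ ^ 2 := by
    have hparseval := b.sq_norm_inner_zero_add_sq_norm_inner_one (a 0)
    rw [a.orthonormal.1 0, norm_inner_symm (b 0), norm_inner_symm (b 1)] at hparseval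
    linarith
  revert i
  refine Fin.forall_fin_two.2 ⟨by rw [hcol], ?_⟩
  rw [hcol, hrow, sub_sub_cancel, Real.sqrt_sq (norm_nonneg _), mul_comm,
    ← Real.sqrt_sq (norm_nonneg ⟪a 0, b 1⟫), hrow]

lemma exists_norm_eq_one_inner_ketbra_eq {ψ : ℂ} (hψ : ‖ψ‖ = 1) :
    ∃ u : E, ‖u‖ = 1 ∧ ⟪a 0, ketbra u (a 1)⟫ = conj ψ / 2 := by
  set s : ℂ := (((√2)⁻¹ : ℝ) : ℂ)
  have hs : s * s = 1 / 2 := by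
    simp only [s, ← Complex.ofReal_mul, ← mul_inv, Real.mul_self_sqrt zero_le_two]; norm_num
  set u := s • a 0 + (s * ψ) • a 1
  have hu0 : ⟪a 0, u⟫ = s := by simp [u, orthonormal_iff_ite.mp a.orthonormal]
  have hu1 : ⟪a 1, u⟫ = s * ψ := by simp [u, orthonormal_iff_ite.mp a.orthonormal]
  refine ⟨u, ?_, ?_⟩
  · have hparseval := a.sq_norm_inner_zero_add_sq_norm_inner_one u
    rw [hu0, hu1, norm_mul, hψ, mul_one, ← norm_pow, sq, hs] at hparseval
    norm_num at hparseval
    exact (pow_eq_one_iff_of_nonneg (norm_nonneg u) two_ne_zero).1 hparseval.symm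
  · rw [inner_ketbra_apply, hu0, ← inner_conj_symm, hu1, map_mul, Complex.conj_ofReal]
    linear_combination conj ψ * hs

lemma exists_isDensity_norm_trace_comp_distOp_eq (b : κ → E) (i : κ) :
    ∃ ρ, IsDensity ρ ∧
      ‖LinearMap.trace ℂ E (ρ ∘ₗ distOp a b i)‖ = ‖⟪a 0, b i⟫‖ * ‖⟪a 1, b i⟫‖ := by
  have : FiniteDimensional ℂ E := a.toBasis.finiteDimensional_of_finite
  set c := conj ⟪a 0, b i⟫ * ⟪a 1, b i⟫
  set ψ := Complex.exp (c.arg * Complex.I)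
  have hψ : ‖ψ‖ = 1 := Complex.norm_exp_ofReal_mul_I _
  have hc : c * conj ψ = ‖c‖ := by
    rw [← Complex.norm_mul_exp_arg_mul_I c, mul_assoc, Complex.mul_conj', hψ]
    simp
  obtain ⟨u, hu, hoff⟩ := exists_norm_eq_one_inner_ketbra_eq a hψ
  have hρ := isDensity_ketbra hu
  refine ⟨ketbra u, hρ, ?_⟩
  have hnorm : ‖c‖ = ‖⟪a 0, b i⟫‖ * ‖⟪a 1, b i⟫‖ := by
    simp only [c, norm_mul, Complex.norm_conj]
  rw [trace_comp_distOp_fin_two a hρ.1, hoff, ← mul_div_assoc, hc, ← hnorm]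
  norm_num [mul_div_cancel₀]

end

/-- in dimension 2, `η(𝒜,ℬ) = |⟨a₁,b₁⟩|·√(1-|⟨a₁,b₁⟩|²)` (= ½ sin θ). -/
theorem disturbance_qubit_closed_form (a b : OrthonormalBasis (Fin 2) ℂ H) :
    siDist (⇑a) (⇑b) = ‖⟪a 0, b 0⟫‖ * Real.sqrt (1 - ‖⟪a 0, b 0⟫‖ ^ 2) := by
  obtain ⟨ρ₀, hρ₀, hval⟩ := exists_isDensity_norm_trace_comp_distOp_eq a b 0
  have : Nonempty {ρ : H →ₗ[ℂ] H // IsDensity ρ} := ⟨⟨ρ₀, hρ₀⟩⟩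
  have hle (ρ : {ρ : H →ₗ[ℂ] H // IsDensity ρ}) :
      sdDist a b ρ ≤ ‖⟪a 0, b 0⟫‖ * √(1 - ‖⟪a 0, b 0⟫‖ ^ 2) :=
    ciSup_le fun i ↦
      (norm_trace_comp_distOp_le a ρ.2 b i).trans_eq (norm_inner_mul_norm_inner_eq a b i)
  rw [siDist]
  refine le_antisymm (ciSup_le hle) ?_
  refine le_ciSup_of_le ⟨_, Set.forall_mem_range.2 hle⟩ ⟨ρ₀, hρ₀⟩ ?_
  rw [← norm_inner_mul_norm_inner_eq a b 0, ← hval]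
  exact norm_trace_comp_distOp_le_sdDist _ _ _ 0
end
end
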